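/- arXiv:2305.03285 — 2 statements merged into one kernel-verified Lean document; each statement's English description precedes it below -/
import Mathlib

section
/- Let n, m, t be integers with 1 ≤ t ≤ m ≤ n and let B be a set of m-element subsets of Ω = {1,…,n}. Let Aut(B) = {σ in the symmetric group S_n : {σ(b) : b ∈ B} = B}. Then B is a combinatorial t-design (i.e. every t-element subset of Ω is contained in the same number of members of B) if and only if for every k with 1 ≤ k ≤ t and every f ∈ Harm_k that is fixed by the action of every element of Aut(B), one has Σ_{b ∈ B} f̃(b) = 0. -/
/-!
Write `λ_z` for the number of blocks containing `z`. Exchanging sums gives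
`∑_{b ∈ B} f̃(b) = ∑_{z ∈ X_k} λ_z f(z)`, and a harmonic `f` of degree `k ≥ 1` sums to zero
over `X_k`. Counting pairs `z ⊆ T ⊆ b` shows that a `t`-design with blocks of size `m` has
`λ` constant on `X_k` for every `k ≤ t`, so the block sums vanish.

Conversely, averaging a harmonic `f` over `Aut(B)` yields an invariant harmonic function whose
block sum is `|Aut(B)|` times that of `f`, so the block sums vanish for all harmonic `f`. If `λ`
is constant, equal to `λ₀`, on `X_k`, then `g = (n - k) λ - (m - k) λ₀` is harmonic on `X_{k+1}`;
its vanishing block sum says `g ⊥ λ`, harmonicity gives `g ⊥ 1`, hence `g ⊥ g`, so `g = 0` and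
`λ` is constant on `X_{k+1}`.
-/

open scoped Classical

noncomputable section

open Finset Pointwise

/-- The paper's `f̃(u)` for `f ∈ ℝX_k`. -/
def tilde {α : Type*} (k : ℕ) (f : Finset α → ℝ) (u : Finset α) : ℝ :=
  ∑ z ∈ u.powersetCard k, f z

def blockCount {α : Type*} [DecidableEq α] (B : Finset (Finset α)) (z : Finset α) : ℕ :=
  #(B.filter (z ⊆ ·))

def IsDesign {α : Type*} [DecidableEq α] (B : Finset (Finset α)) (t : ℕ) : Prop :=
  ∃ lam : ℕ, ∀ T : Finset α, T.card = t → blockCount B T = lam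

/-- `f ∈ Harm_k`, with `f` read as a function on `X_k`. -/
def IsHarmonic {α : Type*} [Fintype α] [DecidableEq α] (k : ℕ) (f : Finset α → ℝ) : Prop :=
  ∀ y : Finset α, y.card = k - 1 → ∑ z ∈ univ.filter (fun z => z.card = k ∧ y ⊆ z), f z = 0

lemma filter_card_eq_and_superset {α : Type*} [Fintype α] [DecidableEq α] (k : ℕ)
    (y : Finset α) :
    univ.filter (fun z => z.card = k ∧ y ⊆ z) = (univ.powersetCard k).filter (y ⊆ ·) := by
  ext z
  simp

lemma sum_tilde_eq_sum_blockCount_mul {α : Type*} [Fintype α] [DecidableEq α]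
    (B : Finset (Finset α)) (k : ℕ) (f : Finset α → ℝ) :
    ∑ b ∈ B, tilde k f b = ∑ z ∈ univ.powersetCard k, blockCount B z * f z := by
  unfold tilde blockCount
  rw [sum_comm' (t' := univ.powersetCard k) (s' := fun z => B.filter (z ⊆ ·))]
  · simp only [sum_const, nsmul_eq_mul]
  · intro b z
    simp only [mem_powersetCard, mem_filter, subset_univ, true_and]
    tauto

lemma IsHarmonic.sum_powersetCard_univ_eq_zero {α : Type*} [Fintype α] [DecidableEq α]
    {k : ℕ} {f : Finset α → ℝ} (hf : IsHarmonic k f) (hk : k ≠ 0) :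
    ∑ z ∈ univ.powersetCard k, f z = 0 := by
  obtain ⟨j, rfl⟩ := Nat.exists_eq_add_one_of_ne_zero hk
  -- each `z ∈ X_{j+1}` lies above exactly `j + 1` sets `y ∈ X_j`
  have hdouble : ∑ y ∈ univ.powersetCard j, ∑ z ∈ univ.filter (fun z => z.card = j + 1 ∧ y ⊆ z),
      f z = (j + 1) * ∑ z ∈ univ.powersetCard (j + 1), f z := by
    rw [sum_comm' (t' := univ.powersetCard (j + 1)) (s' := fun z => z.powersetCard j), mul_sum]
    · refine sum_congr rfl fun z hz => ?_
      rw [sum_const, card_powersetCard, mem_powersetCard_univ.1 hz, Nat.choose_succ_self_right,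
        nsmul_eq_mul, Nat.cast_succ]
    · intro y z
      simp only [mem_powersetCard, mem_filter, subset_univ, mem_univ, true_and]
      tauto
  have hzero : ∑ y ∈ univ.powersetCard j, ∑ z ∈ univ.filter (fun z => z.card = j + 1 ∧ y ⊆ z),
      f z = 0 :=
    sum_eq_zero fun y hy => hf y (mem_powersetCard_univ.1 hy)
  rw [hdouble] at hzero
  exact (mul_eq_zero.1 hzero).resolve_left (by positivity)

lemma sum_blockCount_filter_superset {α : Type*} [Fintype α] [DecidableEq α]
    {B : Finset (Finset α)} {m : ℕ} (hB : ∀ b ∈ B, b.card = m) {z : Finset α} {t : ℕ}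
    (hzt : z.card ≤ t) :
    ∑ T ∈ (univ.powersetCard t).filter (z ⊆ ·), blockCount B T
      = blockCount B z * (m - z.card).choose (t - z.card) := by
  unfold blockCount
  simp_rw [card_eq_sum_ones (B.filter _)]
  rw [sum_comm' (t' := B.filter (z ⊆ ·)) (s' := fun b => (b.powersetCard t).filter (z ⊆ ·))]
  · rw [← card_eq_sum_ones, card_eq_sum_ones (B.filter _), sum_mul]
    refine sum_congr rfl fun b hb => ?_
    obtain ⟨hbB, hzb⟩ := mem_filter.1 hb
    rw [← card_eq_sum_ones, card_filter_powersetCard_subset z b t hzb hzt, hB b hbB, one_mul]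
  · intro T b
    simp only [mem_powersetCard, mem_filter, subset_univ, true_and]
    constructor
    · rintro ⟨⟨hT, hzT⟩, hb, hTb⟩
      exact ⟨⟨⟨hTb, hT⟩, hzT⟩, hb, hzT.trans hTb⟩
    · rintro ⟨⟨⟨hTb, hT⟩, hzT⟩, hb, -⟩
      exact ⟨⟨hT, hzT⟩, hb, hTb⟩

lemma IsDesign.of_forall_eq {α : Type*} [DecidableEq α] {B : Finset (Finset α)} {k : ℕ} {c : ℝ}
    (h : ∀ z : Finset α, z.card = k → (blockCount B z : ℝ) = c) : IsDesign B k := by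
  by_cases hex : ∃ z₀ : Finset α, z₀.card = k
  · obtain ⟨z₀, hz₀⟩ := hex
    exact ⟨blockCount B z₀, fun T hT => by exact_mod_cast (h T hT).trans (h z₀ hz₀).symm⟩
  · exact ⟨0, fun T hT => absurd ⟨T, hT⟩ hex⟩

lemma IsDesign.mono {α : Type*} [Fintype α] [DecidableEq α] {B : Finset (Finset α)} {m t k : ℕ}
    (hB : ∀ b ∈ B, b.card = m) (htm : t ≤ m) (h : IsDesign B t) (hkt : k ≤ t) :
    IsDesign B k := by
  obtain ⟨lam, hlam⟩ := h
  have hpos : (0 : ℝ) < (m - k).choose (t - k) := by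
    exact_mod_cast Nat.choose_pos (by omega)
  refine IsDesign.of_forall_eq
    (c := lam * (Fintype.card α - k).choose (t - k) / (m - k).choose (t - k)) fun z hz => ?_
  have hcount := sum_blockCount_filter_superset hB (hz ▸ hkt : z.card ≤ t)
  rw [sum_congr rfl fun T hT => hlam T (mem_powersetCard_univ.1 (mem_filter.1 hT).1), sum_const,
    card_filter_powersetCard_subset z univ t (subset_univ z) (by omega), card_univ, hz,
    smul_eq_mul] at hcount
  rw [eq_div_iff hpos.ne']
  exact_mod_cast hcount.symm.trans (mul_comm _ _)

lemma IsDesign.sum_tilde_eq_zero {α : Type*} [Fintype α] [DecidableEq α]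
    {B : Finset (Finset α)} {k : ℕ} {f : Finset α → ℝ} (h : IsDesign B k) (hf : IsHarmonic k f)
    (hk : k ≠ 0) : ∑ b ∈ B, tilde k f b = 0 := by
  obtain ⟨lam, hlam⟩ := h
  rw [sum_tilde_eq_sum_blockCount_mul,
    sum_congr rfl fun z hz => by rw [hlam z (mem_powersetCard_univ.1 hz)], ← mul_sum,
    hf.sum_powersetCard_univ_eq_zero hk, mul_zero]

lemma IsHarmonic.comp_smul {α G : Type*} [Fintype α] [DecidableEq α] [Group G] [MulAction G α]
    {k : ℕ} {f : Finset α → ℝ} (hf : IsHarmonic k f) (σ : G) :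
    IsHarmonic k (fun z => f (σ • z)) := by
  intro y hy
  rw [sum_equiv (MulAction.toPerm σ) (t := univ.filter (fun w => w.card = k ∧ σ • y ⊆ w))
    (g := f) (by simp [card_smul_finset, smul_finset_subset_smul_finset_iff]) (by simp)]
  exact hf _ (by rwa [card_smul_finset])

lemma tilde_comp_smul {α G : Type*} [DecidableEq α] [Group G] [MulAction G α] (k : ℕ)
    (f : Finset α → ℝ) (σ : G) (u : Finset α) :
    tilde k (fun z => f (σ • z)) u = tilde k f (σ • u) :=
  sum_equiv (MulAction.toPerm σ)
    (by simp [card_smul_finset, smul_finset_subset_smul_finset_iff]) (by simp)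

lemma sum_comp_smul_of_mem_stabilizer {X G : Type*} [DecidableEq X] [Group G] [MulAction G X]
    {B : Finset X} {σ : G} (hσ : σ ∈ MulAction.stabilizer G B) (g : X → ℝ) :
    ∑ b ∈ B, g (σ • b) = ∑ b ∈ B, g b :=
  sum_equiv (MulAction.toPerm σ)
    (fun b => by conv_rhs => rw [← MulAction.mem_stabilizer_iff.1 hσ]; simp) (by simp)

lemma Fintype.sum_smul_smul {X G M : Type*} [Group G] [Fintype G] [MulAction G X]
    [AddCommMonoid M] (f : X → M) (τ : G) (x : X) :
    ∑ σ : G, f (σ • τ • x) = ∑ σ : G, f (σ • x) := by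
  simp_rw [smul_smul]
  exact Equiv.sum_comp (Equiv.mulRight τ) fun σ => f (σ • x)

lemma sum_tilde_eq_zero_of_forall_invariant {α G : Type*} [Fintype α] [DecidableEq α] [Group G]
    [Fintype G] [MulAction G α] {B : Finset (Finset α)} {k : ℕ}
    (H : ∀ f : Finset α → ℝ, IsHarmonic k f →
      (∀ σ ∈ MulAction.stabilizer G B, ∀ z : Finset α, z.card = k → f (σ⁻¹ • z) = f z) →
      ∑ b ∈ B, tilde k f b = 0)
    {f : Finset α → ℝ} (hf : IsHarmonic k f) : ∑ b ∈ B, tilde k f b = 0 := by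
  set S := MulAction.stabilizer G B
  set F : Finset α → ℝ := fun z => ∑ σ : S, f ((σ : G) • z)
  have hF_harmonic : IsHarmonic k F := fun y hy => by
    simp only [F]
    rw [sum_comm]
    exact sum_eq_zero fun σ _ => hf.comp_smul (σ : G) y hy
  have hF_invariant : ∀ τ ∈ S, ∀ z : Finset α, z.card = k → F (τ⁻¹ • z) = F z :=
    fun τ hτ z _ => Fintype.sum_smul_smul f (⟨τ, hτ⟩⁻¹ : S) z
  have hF_sum : ∑ b ∈ B, tilde k F b = Fintype.card S * ∑ b ∈ B, tilde k f b := by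
    calc ∑ b ∈ B, tilde k F b = ∑ b ∈ B, ∑ σ : S, tilde k (fun z => f ((σ : G) • z)) b :=
          sum_congr rfl fun b _ => sum_comm
      _ = ∑ σ : S, ∑ b ∈ B, tilde k f ((σ : G) • b) := by
          rw [sum_comm]
          simp only [tilde_comp_smul]
      _ = ∑ σ : S, ∑ b ∈ B, tilde k f b :=
          sum_congr rfl fun σ _ => sum_comp_smul_of_mem_stabilizer σ.2 _
      _ = Fintype.card S * ∑ b ∈ B, tilde k f b := by
          rw [sum_const, card_univ, nsmul_eq_mul]
  have hzero := H F hF_harmonic hF_invariant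
  rw [hF_sum] at hzero
  exact (mul_eq_zero.1 hzero).resolve_left (by simp)

lemma IsDesign.succ {α : Type*} [Fintype α] [DecidableEq α] {B : Finset (Finset α)} {m k : ℕ}
    (hB : ∀ b ∈ B, b.card = m) (hkm : k < m) (hm : m ≤ Fintype.card α) (h : IsDesign B k)
    (H : ∀ f : Finset α → ℝ, IsHarmonic (k + 1) f → ∑ b ∈ B, tilde (k + 1) f b = 0) :
    IsDesign B (k + 1) := by
  obtain ⟨lam, hlam⟩ := h
  set N : ℝ := ((Fintype.card α - k : ℕ) : ℝ)
  set M : ℝ := ((m - k : ℕ) : ℝ)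
  have hN : N ≠ 0 := by simp only [N]; exact_mod_cast (by omega : Fintype.card α - k ≠ 0)
  set f : Finset α → ℝ := fun z => N * blockCount B z - M * lam
  have hf : IsHarmonic (k + 1) f := by
    intro y hy
    rw [Nat.add_sub_cancel] at hy
    have hcount := sum_blockCount_filter_superset hB (t := k + 1) (by omega : y.card ≤ k + 1)
    rw [hy, hlam y hy, Nat.add_sub_cancel_left, Nat.choose_one_right] at hcount
    rw [filter_card_eq_and_superset, sum_sub_distrib, ← mul_sum, sum_const,
      card_filter_powersetCard_subset y univ (k + 1) (subset_univ y) (by omega), card_univ, hy,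
      Nat.add_sub_cancel_left, Nat.choose_one_right, ← Nat.cast_sum, hcount, nsmul_eq_mul]
    push_cast
    ring
  set X := (univ : Finset α).powersetCard (k + 1)
  have hweighted : ∑ z ∈ X, blockCount B z * f z = 0 := by
    rw [← sum_tilde_eq_sum_blockCount_mul]
    exact H f hf
  have hsum : ∑ z ∈ X, f z = 0 := hf.sum_powersetCard_univ_eq_zero (by omega)
  have hsq : ∑ z ∈ X, f z ^ 2 = 0 := by
    calc ∑ z ∈ X, f z ^ 2 = N * ∑ z ∈ X, blockCount B z * f z - M * lam * ∑ z ∈ X, f z := by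
          rw [mul_sum, mul_sum, ← sum_sub_distrib]
          exact sum_congr rfl fun z _ => by ring
      _ = 0 := by rw [hweighted, hsum, mul_zero, mul_zero, sub_zero]
  refine IsDesign.of_forall_eq (c := M * lam / N) fun z hz => ?_
  have hfz : f z = 0 := pow_eq_zero_iff two_ne_zero |>.1 <|
    (sum_eq_zero_iff_of_nonneg fun w _ => sq_nonneg (f w)).1 hsq z (mem_powersetCard_univ.2 hz)
  rw [eq_div_iff hN]
  linarith [hfz]

lemma isDesign_of_forall_sum_tilde_eq_zero {α : Type*} [Fintype α] [DecidableEq α]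
    {B : Finset (Finset α)} {m t : ℕ} (hB : ∀ b ∈ B, b.card = m) (htm : t ≤ m)
    (hm : m ≤ Fintype.card α)
    (H : ∀ k : ℕ, 1 ≤ k → k ≤ t → ∀ f : Finset α → ℝ, IsHarmonic k f →
      ∑ b ∈ B, tilde k f b = 0) :
    IsDesign B t := by
  suffices ∀ k ≤ t, IsDesign B k from this t le_rfl
  intro k
  induction k with
  | zero =>
    refine fun _ => ⟨B.card, fun T hT => ?_⟩
    rw [card_eq_zero.1 hT, blockCount, filter_true_of_mem fun b _ => empty_subset b]
  | succ k ih =>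
    exact fun hk => (ih (by omega)).succ hB (by omega) hm fun f => H (k + 1) (by omega) hk f

theorem design_iff_invariant_harmonic_sums_vanish_general (n m t : ℕ)
    (htm : t ≤ m) (hmn : m ≤ n)
    (B : Finset (Finset (Fin n))) (hB : ∀ b ∈ B, b.card = m) :
    (∃ lam : ℕ, ∀ T : Finset (Fin n), T.card = t →
        (B.filter fun b => T ⊆ b).card = lam) ↔
      (∀ k : ℕ, 1 ≤ k → k ≤ t → ∀ f : Finset (Fin n) → ℝ,
        (∀ y : Finset (Fin n), y.card = k - 1 →
          ∑ z ∈ Finset.univ.filter (fun z : Finset (Fin n) => z.card = k ∧ y ⊆ z), f z = 0) →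
        (∀ σ : Equiv.Perm (Fin n), B.image (fun b => b.image σ) = B →
          ∀ z : Finset (Fin n), z.card = k → f (z.image ⇑σ⁻¹) = f z) →
        ∑ b ∈ B, ∑ z ∈ b.powersetCard k, f z = 0) := by
  -- `IsDesign`, `IsHarmonic`, `tilde` and `MulAction.stabilizer` unfold to the forms above
  constructor
  · rintro hdesign k hk hkt f hf -
    exact (IsDesign.mono hB htm hdesign hkt).sum_tilde_eq_zero hf (by omega)
  · intro H
    exact isDesign_of_forall_sum_tilde_eq_zero hB htm (by simpa using hmn)
      fun k hk hkt f hf => sum_tilde_eq_zero_of_forall_invariant (H k hk hkt) hf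

/-- **(Theorem of Awada–Miezaki–Munemasa–Nakasora.)** Let `1 ≤ t ≤ m ≤ n` and let `B` be a
set of `m`-element subsets of `{1, …, n}` with automorphism group
`Aut(B) = {σ ∈ Sₙ | σ(B) = B}`. Then `B` is a combinatorial `t`-design (every `t`-element
subset of the points lies in the same number `λ` of blocks) if and only if for every
`1 ≤ k ≤ t` and every harmonic function `f` of degree `k` (i.e. `f : X_k → ℝ` with
`(γ f)(y) = ∑_{z ∈ X_k, y ⊆ z} f z = 0` for all `y ∈ X_{k-1}`) that is fixed by every
`σ ∈ Aut(B)` (i.e. `f (σ⁻¹ z) = f z` on `X_k`), one has `∑_{b ∈ B} f̃(b) = 0`, where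
`f̃(b) = ∑_{z ∈ X_k, z ⊆ b} f z`. -/
theorem design_iff_invariant_harmonic_sums_vanish (n m t : ℕ)
    (ht1 : 1 ≤ t) (htm : t ≤ m) (hmn : m ≤ n)
    (B : Finset (Finset (Fin n))) (hB : ∀ b ∈ B, b.card = m) :
    (∃ lam : ℕ, ∀ T : Finset (Fin n), T.card = t →
        (B.filter fun b => T ⊆ b).card = lam) ↔
      (∀ k : ℕ, 1 ≤ k → k ≤ t → ∀ f : Finset (Fin n) → ℝ,
        (∀ y : Finset (Fin n), y.card = k - 1 →
          ∑ z ∈ Finset.univ.filter (fun z : Finset (Fin n) => z.card = k ∧ y ⊆ z), f z = 0) →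
        (∀ σ : Equiv.Perm (Fin n), B.image (fun b => b.image σ) = B →
          ∀ z : Finset (Fin n), z.card = k → f (z.image ⇑σ⁻¹) = f z) →
        ∑ b ∈ B, ∑ z ∈ b.powersetCard k, f z = 0) :=
  design_iff_invariant_harmonic_sums_vanish_general n m t htm hmn B hB
end
end

section
/- Let C be the extended ternary quadratic residue code of length 14. The set of weights of codewords of C, i.e. {wt(c) : c ∈ C}, is exactly {0, 6, 7, 8, 9, 10, 11, 12, 14}. -/
open scoped Classical

noncomputable section

/-- Membership in the ternary quadratic residue code of length 13: the codeword, viewed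
as the polynomial `∑ cᵢ Xⁱ` modulo `X ^ 13 - 1`, lies in the ideal generated by the
polynomial whose roots are `α ^ ℓ` for `ℓ` running over the nonzero squares mod 13;
equivalently (as that generator is separable and divides `X ^ 13 - 1`), the codeword
polynomial vanishes at `α ^ ℓ` for every nonzero square `ℓ` modulo 13. -/
def qr3Mem {K : Type} [Field K] [Algebra (ZMod 3) K] (α : K) (c : Fin 13 → ZMod 3) : Prop :=
  ∀ ℓ : ZMod 13, ℓ ≠ 0 → IsSquare ℓ →
    ∑ i : Fin 13, algebraMap (ZMod 3) K (c i) * α ^ (ℓ.val * (i : ℕ)) = 0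

/-- Membership in the extended ternary quadratic residue code of length 14: the first 13
coordinates form a codeword of the quadratic residue code of length 13 and the last
coordinate is minus the sum of the first 13. -/
def extQR3Mem {K : Type} [Field K] [Algebra (ZMod 3) K] (α : K) (c : Fin 14 → ZMod 3) : Prop :=
  qr3Mem α (fun i => c i.castSucc) ∧ c (Fin.last 13) = - ∑ i : Fin 13, c i.castSucc

/-- Hamming weight: the number of nonzero coordinates. -/
def wt {n : ℕ} {F : Type} [Zero F] (c : Fin n → F) : ℕ :=
  (Finset.univ.filter fun i => c i ≠ 0).card

/-- Support: the set of nonzero coordinate positions. -/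
def supp {n : ℕ} {F : Type} [Zero F] (c : Fin n → F) : Finset (Fin n) :=
  Finset.univ.filter fun i => c i ≠ 0

/-!
The quadratic residues mod 13 are the two orbits `{1, 3, 9}` and `{4, 12, 10}` of multiplication
by 3, so by Frobenius the code `Q` is generated by `g = m₁ m₄`, where `m₁ = X³ - sX² + tX - 1` and
`m₄ = X³ - tX² + sX - 1` are the minimal polynomials of `α` and `α⁴` over `𝔽₃`. Their coefficients
are the Gaussian periods `s = α + α³ + α⁹` and `t = α⁴ + α¹⁰ + α¹²`; these are fixed by cubing,
hence lie in `𝔽₃`, and satisfy `(s + 1)(t + 1) = 0` and `(s + t)(s + t + 1) = 0`, which leaves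
only two possible generators. As `g` is monic of degree 6 and vanishes exactly at the six residue
powers of `α`, the codewords of `Q` are the products `a g` with `deg a < 7`, and the weight set is
found by running through the `3⁷` messages `a` for both generators.
-/

open Polynomial

/-! Coefficient lists, constant term first. Unlike `Polynomial`, they compute in the kernel, which
is what lets `decide` run through the whole code. -/

namespace CoeffList

variable {R : Type*}

def add [Add R] : List R → List R → List R
  | [], b => b
  | a, [] => a
  | x :: a, y :: b => (x + y) :: add a b

def mul [Semiring R] : List R → List R → List R
  | [], _ => []
  | x :: a, b => add (b.map (x * ·)) (0 :: mul a b)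

def toPoly [Semiring R] (l : List R) : R[X] :=
  l.foldr (fun x p => C x + X * p) 0

theorem length_add [Add R] (a b : List R) : (add a b).length = max a.length b.length := by
  induction a, b using add.induct with
  | case1 b => simp [add]
  | case2 a ha => cases a <;> simp_all [add]
  | case3 x a y b ih => simp [add, ih]

section Semiring

variable [Semiring R]

theorem length_mul {a b : List R} (ha : a ≠ []) (hb : b ≠ []) :
    (mul a b).length = a.length + b.length - 1 := by
  have hb' := List.length_pos_iff.2 hb
  induction a with
  | nil => exact absurd rfl ha
  | cons x a ih =>
    rw [mul, length_add, List.length_map, List.length_cons]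
    cases a with
    | nil => simp [mul]; omega
    | cons y a => rw [ih (List.cons_ne_nil y a)]; simp; omega

@[simp]
theorem toPoly_nil : toPoly ([] : List R) = 0 := rfl

@[simp]
theorem toPoly_cons (x : R) (l : List R) : toPoly (x :: l) = C x + X * toPoly l := rfl

theorem toPoly_add (a b : List R) : toPoly (add a b) = toPoly a + toPoly b := by
  induction a, b using add.induct with
  | case1 b => simp [add]
  | case2 a ha => cases a <;> simp_all [add]
  | case3 x a y b ih => simp only [add, toPoly_cons, ih, C_add, mul_add]; abel

theorem coeff_toPoly (l : List R) (i : ℕ) : (toPoly l).coeff i = l.getD i 0 := by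
  induction l generalizing i with
  | nil => simp
  | cons x l ih => cases i <;> simp [coeff_C, ih]

theorem eq_of_toPoly_eq {a b : List R} (hlen : a.length = b.length) (h : toPoly a = toPoly b) :
    a = b := by
  refine List.ext_getElem hlen fun i hia hib => ?_
  simpa [coeff_toPoly, List.getD_eq_getElem, hia, hib] using congrArg (coeff · i) h

theorem toPoly_ofFn [DecidableEq R] {n : ℕ} (v : Fin n → R) : toPoly (List.ofFn v) = ofFn n v := by
  ext i
  rw [coeff_toPoly]
  by_cases hi : i < n
  · simp [hi]
  · simp [hi, Nat.le_of_not_lt hi]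

end Semiring

section CommSemiring

variable [CommSemiring R]

theorem toPoly_map_mul (x : R) (l : List R) : toPoly (l.map (x * ·)) = C x * toPoly l := by
  induction l with
  | nil => simp
  | cons y l ih => simp only [List.map_cons, toPoly_cons, ih, C_mul]; ring

theorem toPoly_mul (a b : List R) : toPoly (mul a b) = toPoly a * toPoly b := by
  induction a with
  | nil => simp [mul]
  | cons x a ih => simp only [mul, toPoly_add, toPoly_map_mul, toPoly_cons, ih, C_0]; ring

end CommSemiring

end CoeffList

open CoeffList

theorem List.exists_ofFn_eq_of_length_eq {R : Type*} {n : ℕ} {l : List R} (h : l.length = n) :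
    ∃ c : Fin n → R, List.ofFn c = l := by
  subst h
  exact ⟨_, List.ofFn_getElem⟩

theorem Polynomial.aeval_ofFn {R A : Type*} [CommSemiring R] [DecidableEq R] [Semiring A]
    [Algebra R A] {n : ℕ} (v : Fin n → R) (x : A) :
    aeval x (ofFn n v) = ∑ i, algebraMap R A (v i) * x ^ (i : ℕ) := by
  simp [ofFn_eq_sum_monomial, aeval_monomial]

theorem ZMod.aeval_pow_char {p : ℕ} [Fact p.Prime] {A : Type*} [CommSemiring A]
    [Algebra (ZMod p) A] (f : (ZMod p)[X]) (x : A) : aeval (x ^ p) f = aeval x f ^ p := by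
  rw [← expand_aeval, ZMod.expand_card, map_pow]

theorem Polynomial.Monic.dvd_iff_forall_aeval_eq_zero {F L ι : Type*} [Field F] [Field L]
    [Algebra F L] [Fintype ι] {g : F[X]} (hg : g.Monic) {r : ι → L} (hr : Function.Injective r)
    (hcard : g.natDegree ≤ Fintype.card ι) (hroot : ∀ i, aeval (r i) g = 0) {p : F[X]} :
    g ∣ p ↔ ∀ i, aeval (r i) p = 0 := by
  refine ⟨fun ⟨q, hq⟩ i => by simp [hq, hroot i], fun hp => ?_⟩
  rw [← modByMonic_eq_zero_iff_dvd hg]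
  by_contra hmod
  have hdeg : (p %ₘ g).natDegree < g.natDegree :=
    natDegree_lt_natDegree hmod (degree_modByMonic_lt p hg)
  have hmap : (p %ₘ g).map (algebraMap F L) = 0 := by
    refine eq_zero_of_natDegree_lt_card_of_eval_eq_zero _ hr (fun i => ?_) ?_
    · rw [eval_map_algebraMap, aeval_modByMonic_eq_self_of_root (hroot i), hp i]
    · rw [natDegree_map_eq_of_injective (algebraMap F L).injective]; omega
  exact hmod ((Polynomial.map_eq_zero_iff (algebraMap F L).injective).1 hmap)

theorem Polynomial.Monic.dvd_ofFn_iff {F : Type*} [Field F] [DecidableEq F] {g : F[X]}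
    (hg : g.Monic) {m d : ℕ} (hd : g.natDegree = d) (c : Fin (m + d) → F) :
    g ∣ ofFn (m + d) c ↔ ∃ a : Fin m → F, ofFn (m + d) c = ofFn m a * g := by
  refine ⟨fun ⟨q, hq⟩ => ?_, fun ⟨a, ha⟩ => ⟨ofFn m a, by rw [ha, mul_comm]⟩⟩
  rcases eq_or_ne q 0 with rfl | hq0
  · exact ⟨0, by simpa using hq⟩
  have hqdeg : q.natDegree < m := by
    have := ofFn_degree_lt c
    rw [hq, Polynomial.degree_mul, degree_eq_natDegree hg.ne_zero, degree_eq_natDegree hq0] at this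
    norm_cast at this
    omega
  exact ⟨toFn m q, by rw [ofFn_comp_toFn_eq_id_of_natDegree_lt hqdeg, hq, mul_comm]⟩

def parityExtend {R : Type*} [Ring R] (l : List R) : List R := l ++ [-l.sum]

theorem ofFn_eq_parityExtend_iff {R : Type*} [Ring R] {n : ℕ} (c : Fin (n + 1) → R)
    (l : List R) : List.ofFn c = parityExtend l ↔
      List.ofFn (fun i => c i.castSucc) = l ∧ c (Fin.last n) = -∑ i : Fin n, c i.castSucc := by
  rw [List.ofFn_succ', parityExtend, List.concat_eq_append]
  constructor
  · intro h
    obtain ⟨rfl, hlast⟩ := List.append_inj' h rfl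
    exact ⟨rfl, by simpa [List.sum_ofFn] using hlast⟩
  · rintro ⟨rfl, hlast⟩
    rw [hlast, List.sum_ofFn]

theorem wt_eq_countP {n : ℕ} {F : Type} [Zero F] [DecidableEq F] (c : Fin n → F) :
    wt c = (List.ofFn c).countP (· ≠ 0) := by
  have : wt c = (Finset.univ.filter fun i => c i ≠ 0).card := by unfold wt; congr
  rw [this, ← List.toFinset_finRange, List.Nodup.card_eq_countP (List.nodup_finRange n),
    List.ofFn_eq_map, List.countP_map]
  rfl

def words (n : ℕ) : List (List (ZMod 3)) := (List.replicate n [0, 1, 2]).sections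

theorem setOf_exists_ofFn_eq_map_words {n : ℕ} (f : List (ZMod 3) → ℕ) :
    {w | ∃ a : Fin n → ZMod 3, f (List.ofFn a) = w} = ↑((words n).map f).toFinset := by
  ext w
  simp only [Set.mem_ofPred_eq, Finset.mem_coe, List.mem_toFinset, List.mem_map]
  constructor
  · rintro ⟨a, rfl⟩
    have hall : ∀ x : ZMod 3, x ∈ [0, 1, 2] := by decide
    refine ⟨List.ofFn a,
      List.mem_sections.2 (List.forall₂_iff_get.2 ⟨by simp, fun i _ _ => ?_⟩), rfl⟩
    simp only [List.get_eq_getElem, List.getElem_replicate]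
    exact hall _
  · rintro ⟨l, hl, rfl⟩
    obtain ⟨a, rfl⟩ := List.exists_ofFn_eq_of_length_eq
      ((List.mem_sections_length hl).trans (List.length_replicate ..))
    exact ⟨a, rfl⟩

def quadraticResidues : Finset (ZMod 13) := {1, 3, 4, 9, 10, 12}

theorem mem_quadraticResidues {ℓ : ZMod 13} : ℓ ∈ quadraticResidues ↔ ℓ ≠ 0 ∧ IsSquare ℓ := by
  revert ℓ
  decide

def cubic (s t : ZMod 3) : List (ZMod 3) := [-1, t, -s, 1]

def generator (s t : ZMod 3) : List (ZMod 3) := mul (cubic s t) (cubic t s)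

def codeword (g a : List (ZMod 3)) : List (ZMod 3) := parityExtend (mul a g)

theorem toPoly_cubic (s t : ZMod 3) : toPoly (cubic s t) = X ^ 3 - C s * X ^ 2 + C t * X - 1 := by
  simp [cubic]
  ring

theorem length_generator (s t : ZMod 3) : (generator s t).length = 7 := rfl

theorem length_mul_generator (s t : ZMod 3) (a : Fin 7 → ZMod 3) :
    (mul (List.ofFn a) (generator s t)).length = 13 := by
  rw [length_mul (by simp) (List.ne_nil_of_length_pos (by rw [length_generator]; omega)),
    length_generator, List.length_ofFn]

theorem monic_toPoly_generator (s t : ZMod 3) : (toPoly (generator s t)).Monic := by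
  rw [generator, toPoly_mul, toPoly_cubic, toPoly_cubic]
  monicity!

theorem natDegree_toPoly_generator (s t : ZMod 3) : (toPoly (generator s t)).natDegree = 6 := by
  rw [generator, toPoly_mul, toPoly_cubic, toPoly_cubic]
  compute_degree!

section QRCode

variable {K : Type} [Field K] [Algebra (ZMod 3) K] {α : K}

theorem aeval_pow_three_eq_zero {f : (ZMod 3)[X]} {x : K} (h : aeval x f = 0) :
    aeval (x ^ 3) f = 0 := by
  rw [ZMod.aeval_pow_char, h, zero_pow three_ne_zero]

theorem aeval_generator_eq_zero {s t : ZMod 3} (h13 : α ^ 13 = 1)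
    (hs : aeval α (toPoly (cubic s t)) = 0) (ht : aeval (α ^ 4) (toPoly (cubic t s)) = 0) :
    ∀ ℓ ∈ quadraticResidues, aeval (α ^ ℓ.val) (toPoly (generator s t)) = 0 := by
  have h10 : α ^ 10 = ((α ^ 4) ^ 3) ^ 3 := by linear_combination (-α ^ 10 * (α ^ 13 + 1)) * h13
  simp only [quadraticResidues, Finset.mem_insert, Finset.mem_singleton, generator, toPoly_mul,
    map_mul]
  rintro ℓ (rfl | rfl | rfl | rfl | rfl | rfl) <;>
    simp only [ZMod.val_one_eq_one_mod, ZMod.val_ofNat, Nat.reduceMod, mul_eq_zero]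
  · simp [hs]
  · simp [aeval_pow_three_eq_zero hs]
  · simp [ht]
  · simp [show α ^ 9 = (α ^ 3) ^ 3 by ring, aeval_pow_three_eq_zero (aeval_pow_three_eq_zero hs)]
  · simp [h10, aeval_pow_three_eq_zero (aeval_pow_three_eq_zero ht)]
  · simp [show α ^ 12 = (α ^ 4) ^ 3 by ring, aeval_pow_three_eq_zero ht]

theorem qr3Mem_iff_dvd (hα : IsPrimitiveRoot α 13) {s t : ZMod 3}
    (hs : aeval α (toPoly (cubic s t)) = 0) (ht : aeval (α ^ 4) (toPoly (cubic t s)) = 0)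
    (c : Fin 13 → ZMod 3) : qr3Mem α c ↔ toPoly (generator s t) ∣ ofFn 13 c := by
  have hinj : Function.Injective fun ℓ : quadraticResidues => α ^ (ℓ : ZMod 13).val :=
    fun ℓ ℓ' h => Subtype.ext (ZMod.val_injective _ (hα.pow_inj (ZMod.val_lt _) (ZMod.val_lt _) h))
  rw [(monic_toPoly_generator s t).dvd_iff_forall_aeval_eq_zero hinj
    (by rw [natDegree_toPoly_generator]; rfl)
    (fun ℓ => aeval_generator_eq_zero hα.pow_eq_one hs ht ℓ ℓ.2)]
  simp only [qr3Mem, Subtype.forall, mem_quadraticResidues, and_imp, aeval_ofFn, ← pow_mul]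

theorem exists_algebraMap_eq_of_pow_three_eq_self {x : K} (hx : x ^ 3 = x) :
    ∃ y : ZMod 3, algebraMap (ZMod 3) K y = x := by
  have : x * (x - 1) * (x + 1) = 0 := by linear_combination hx
  rcases mul_eq_zero.1 this with h | h
  · rcases mul_eq_zero.1 h with h | h
    · exact ⟨0, by simp [h]⟩
    · exact ⟨1, by simp [sub_eq_zero.1 h]⟩
  · exact ⟨-1, by simp [eq_neg_of_add_eq_zero_left h]⟩

theorem exists_cubic_roots (hα : IsPrimitiveRoot α 13) :
    ∃ s t : ZMod 3, aeval α (toPoly (cubic s t)) = 0 ∧ aeval (α ^ 4) (toPoly (cubic t s)) = 0 ∧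
      (s + 1) * (t + 1) = 0 ∧ (s + t) * (s + t + 1) = 0 := by
  have h13 : α ^ 13 = 1 := hα.pow_eq_one
  have hΦ : ∑ i ∈ Finset.range 13, α ^ i = 0 := hα.geom_sum_eq_zero (by norm_num)
  simp only [Finset.sum_range_succ, Finset.sum_range_zero] at hΦ
  have h3 : (3 : K) = 0 := by
    rw [← map_ofNat (algebraMap (ZMod 3) K) 3, show (3 : ZMod 3) = 0 from rfl, map_zero]
  have hs₀ := ZMod.aeval_pow_char (X + X ^ 3 + X ^ 9 : (ZMod 3)[X]) α
  have ht₀ := ZMod.aeval_pow_char (X ^ 4 + X ^ 10 + X ^ 12 : (ZMod 3)[X]) α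
  simp only [map_add, map_pow, aeval_X] at hs₀ ht₀
  obtain ⟨s, hs⟩ := exists_algebraMap_eq_of_pow_three_eq_self (x := α + α ^ 3 + α ^ 9)
    (by linear_combination -hs₀ + (α ^ 14 + α) * h13)
  obtain ⟨t, ht⟩ := exists_algebraMap_eq_of_pow_three_eq_self (x := α ^ 4 + α ^ 10 + α ^ 12)
    (by linear_combination -ht₀ + (α ^ 23 + α ^ 10 + α ^ 17 + α ^ 4) * h13)
  have hinj := (algebraMap (ZMod 3) K).injective
  refine ⟨s, t, ?_, ?_, hinj ?_, hinj ?_⟩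
  · simp [toPoly_cubic, hs, ht]
    linear_combination h13
  · simp [toPoly_cubic, hs, ht]
    linear_combination (1 - α ^ 5 - α ^ 7) * h13
  -- In characteristic zero both products equal 3, hence the `h3` in the certificates.
  · simp only [map_mul, map_add, map_one, map_zero, hs, ht]
    linear_combination h3 + hΦ + (3 + α ^ 2 + α ^ 6 + α ^ 8) * h13
  · simp only [map_mul, map_add, map_one, map_zero, hs, ht]
    linear_combination h3 + 3 * hΦ + (6 + 2 * α + 2 * α ^ 2 + 2 * α ^ 3 + α ^ 5 + 2 * α ^ 6 + α ^ 7
      + 2 * α ^ 8 + 2 * α ^ 9 + α ^ 11) * h13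

theorem extQR3Mem_iff (hα : IsPrimitiveRoot α 13) {s t : ZMod 3}
    (hs : aeval α (toPoly (cubic s t)) = 0) (ht : aeval (α ^ 4) (toPoly (cubic t s)) = 0)
    (c : Fin 14 → ZMod 3) :
    extQR3Mem α c ↔ ∃ a : Fin 7 → ZMod 3, List.ofFn c = codeword (generator s t) (List.ofFn a) := by
  simp only [codeword, ofFn_eq_parityExtend_iff (n := 13), extQR3Mem, qr3Mem_iff_dvd hα hs ht,
    (monic_toPoly_generator s t).dvd_ofFn_iff (m := 7) (natDegree_toPoly_generator s t),
    ← exists_and_right]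
  refine exists_congr fun a => and_congr_left' ⟨fun h => ?_, fun h => ?_⟩
  · refine eq_of_toPoly_eq (by rw [length_mul_generator]; simp) ?_
    rw [toPoly_ofFn, toPoly_mul, toPoly_ofFn]
    exact h
  · rw [← toPoly_ofFn, h, toPoly_mul, toPoly_ofFn]

theorem setOf_wt_extQR3Mem_eq (hα : IsPrimitiveRoot α 13) {s t : ZMod 3}
    (hs : aeval α (toPoly (cubic s t)) = 0) (ht : aeval (α ^ 4) (toPoly (cubic t s)) = 0) :
    {w | ∃ c : Fin 14 → ZMod 3, extQR3Mem α c ∧ wt c = w} =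
      {w | ∃ a : Fin 7 → ZMod 3, (codeword (generator s t) (List.ofFn a)).countP (· ≠ 0) = w} := by
  ext w
  simp only [Set.mem_ofPred_eq, extQR3Mem_iff hα hs ht]
  constructor
  · rintro ⟨c, ⟨a, ha⟩, rfl⟩
    exact ⟨a, by rw [wt_eq_countP, ha]⟩
  · rintro ⟨a, rfl⟩
    obtain ⟨c, hc⟩ := List.exists_ofFn_eq_of_length_eq (n := 14)
      (l := codeword (generator s t) (List.ofFn a))
      (by rw [codeword, parityExtend, List.length_append, length_mul_generator]; rfl)
    exact ⟨c, ⟨a, hc⟩, by rw [wt_eq_countP, hc]⟩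

end QRCode

theorem generator_eq_or_eq {s t : ZMod 3} (h₁ : (s + 1) * (t + 1) = 0)
    (h₂ : (s + t) * (s + t + 1) = 0) :
    generator s t = generator 1 2 ∨ generator s t = generator 0 2 := by
  revert s t
  decide

set_option maxRecDepth 100000 in
theorem weights_codeword_generator {s t : ZMod 3} (h₁ : (s + 1) * (t + 1) = 0)
    (h₂ : (s + t) * (s + t + 1) = 0) :
    ((words 7).map fun a => (codeword (generator s t) a).countP (· ≠ 0)).toFinset =
      {0, 6, 7, 8, 9, 10, 11, 12, 14} := by
  rcases generator_eq_or_eq h₁ h₂ with h | h <;> rw [h] <;> decide +kernel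

/-- The set of weights of codewords of the extended ternary quadratic residue code of
length 14 is exactly `{0, 6, 7, 8, 9, 10, 11, 12, 14}`. -/
theorem ternary_weight_distribution (K : Type) [Field K] [Algebra (ZMod 3) K] (α : K)
    (hα : IsPrimitiveRoot α 13) :
    {w : ℕ | ∃ c : Fin 14 → ZMod 3, extQR3Mem α c ∧ wt c = w} =
      ({0, 6, 7, 8, 9, 10, 11, 12, 14} : Set ℕ) := by
  obtain ⟨s, t, hs, ht, h₁, h₂⟩ := exists_cubic_roots hα
  rw [setOf_wt_extQR3Mem_eq hα hs ht,
    setOf_exists_ofFn_eq_map_words fun l => (codeword (generator s t) l).countP (· ≠ 0),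
    weights_codeword_generator h₁ h₂]
  simp
end
end
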